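/- Let α ∈ (0,1) and define, for real u in the interval (−α⁻², −α²), the functions ρ₊(u) = ((u+1)² + 2u(α² + α⁻²) + 2(α + α⁻¹)·√(u³ + (α² + α⁻²)u² + u))/(u−1)² and ρ₋(u) = ((u+1)² + 2u(α² + α⁻²) − 2(α + α⁻¹)·√(u³ + (α² + α⁻²)u² + u))/(u−1)², using the real square root. Then the logarithmic derivative ρ₋′(u)/ρ₋(u) tends to −∞ as u → −α² from the left and tends to +∞ as u → −α⁻² from the right, while ρ₊′(u)/ρ₊(u) tends to +∞ as u → −α² from the left and tends to −∞ as u → −α⁻² from the right. -/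

import Mathlib

open Filter

/-- `ρ₊(u) = ((u+1)² + 2u(α² + α⁻²) + 2(α + α⁻¹)√(u³ + (α² + α⁻²)u² + u))/(u−1)²`,
with the real square root. -/
noncomputable def rhoP (α : ℝ) (u : ℝ) : ℝ :=
  ((u + 1)^2 + 2 * u * (α^2 + (α^2)⁻¹)
    + 2 * (α + α⁻¹) * Real.sqrt (u^3 + (α^2 + (α^2)⁻¹) * u^2 + u)) / (u - 1)^2

/-- `ρ₋(u) = ((u+1)² + 2u(α² + α⁻²) − 2(α + α⁻¹)√(u³ + (α² + α⁻²)u² + u))/(u−1)²`,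
with the real square root. -/
noncomputable def rhoM (α : ℝ) (u : ℝ) : ℝ :=
  ((u + 1)^2 + 2 * u * (α^2 + (α^2)⁻¹)
    - 2 * (α + α⁻¹) * Real.sqrt (u^3 + (α^2 + (α^2)⁻¹) * u^2 + u)) / (u - 1)^2

/-! ### Auxiliary definitions -/

/-- The radicand. -/
noncomputable def Qf (α u : ℝ) : ℝ := u^3 + (α^2 + (α^2)⁻¹) * u^2 + u

/-- Derivative of the radicand. -/
noncomputable def Qd (α u : ℝ) : ℝ := 3*u^2 + 2*(α^2 + (α^2)⁻¹)*u + 1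

/-- Polynomial part of the numerator. -/
noncomputable def Pf (α u : ℝ) : ℝ := (u + 1)^2 + 2 * u * (α^2 + (α^2)⁻¹)

/-- Derivative of the polynomial part. -/
noncomputable def Pd (α u : ℝ) : ℝ := 2*(u + 1) + 2*(α^2 + (α^2)⁻¹)

/-- Numerator of `rho`. -/
noncomputable def Nf (α ε u : ℝ) : ℝ := Pf α u + ε * (2*(α + α⁻¹)) * Real.sqrt (Qf α u)

/-- Common generalization of `rhoP` (`ε = 1`) and `rhoM` (`ε = -1`). -/
noncomputable def rho (α ε u : ℝ) : ℝ := Nf α ε u / (u - 1)^2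

lemma rhoP_eq (α : ℝ) : rhoP α = rho α 1 := by
  funext u; unfold rhoP rho Nf Pf Qf; ring

lemma rhoM_eq (α : ℝ) : rhoM α = rho α (-1) := by
  funext u; unfold rhoM rho Nf Pf Qf; ring

lemma Qf_pos (α : ℝ) (hα0 : 0 < α) {u : ℝ} (hu : u ∈ Set.Ioo (-(α^2)⁻¹) (-α^2)) :
    0 < Qf α u := by
  obtain ⟨h1, h2⟩ := hu
  have hα2 : (0:ℝ) < α^2 := by positivity
  have hinv : α^2 * (α^2)⁻¹ = 1 := mul_inv_cancel₀ hα2.ne'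
  have hfact : Qf α u = u * (u + α^2) * (u + (α^2)⁻¹) := by
    unfold Qf; linear_combination (-u) * hinv
  rw [hfact]
  have hu0 : u < 0 := h2.trans (neg_lt_zero.mpr hα2)
  have h3 : u + α^2 < 0 := by linarith
  have h4 : 0 < u + (α^2)⁻¹ := by linarith
  exact mul_pos (mul_pos_of_neg_of_neg hu0 h3) h4

lemma hasDerivAt_Qf (α u : ℝ) : HasDerivAt (Qf α) (Qd α u) u := by
  show HasDerivAt (fun v => v^3 + (α^2 + (α^2)⁻¹) * v^2 + v) (Qd α u) u
  have h := ((hasDerivAt_pow 3 u).add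
      (HasDerivAt.const_mul (α^2 + (α^2)⁻¹) (hasDerivAt_pow 2 u))).add (hasDerivAt_id u)
  refine h.congr_deriv ?_
  unfold Qd; push_cast; ring

lemma hasDerivAt_Pf (α u : ℝ) : HasDerivAt (Pf α) (Pd α u) u := by
  show HasDerivAt (fun v => (v + 1)^2 + 2 * v * (α^2 + (α^2)⁻¹)) (Pd α u) u
  have h := (((hasDerivAt_id u).add_const 1).pow 2).add
      (HasDerivAt.mul_const ((hasDerivAt_id u).const_mul 2) (α^2 + (α^2)⁻¹))
  refine h.congr_deriv ?_
  unfold Pd; simp only [id_eq]; push_cast; ring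

lemma hasDerivAt_rho (α ε : ℝ) (hα0 : 0 < α) {u : ℝ}
    (hu : u ∈ Set.Ioo (-(α^2)⁻¹) (-α^2)) :
    HasDerivAt (rho α ε)
      (((Pd α u + ε * (2*(α + α⁻¹)) * (1 / (2 * Real.sqrt (Qf α u)) * Qd α u)) * (u - 1)^2
        - Nf α ε u * (2 * (u - 1))) / ((u - 1)^2)^2) u := by
  have hQpos := Qf_pos α hα0 hu
  have hQ : HasDerivAt (Qf α) (Qd α u) u := hasDerivAt_Qf α u
  have hsq : HasDerivAt (fun v => Real.sqrt (Qf α v))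
      (1 / (2 * Real.sqrt (Qf α u)) * Qd α u) u :=
    (Real.hasDerivAt_sqrt hQpos.ne').comp u hQ
  have hN : HasDerivAt (Nf α ε)
      (Pd α u + ε * (2*(α + α⁻¹)) * (1 / (2 * Real.sqrt (Qf α u)) * Qd α u)) u :=
    (hasDerivAt_Pf α u).add (HasDerivAt.const_mul (ε * (2*(α + α⁻¹))) hsq)
  have hD : HasDerivAt (fun v : ℝ => (v - 1)^2) (2 * (u - 1)) u := by
    have h := ((hasDerivAt_id u).sub_const 1).pow 2
    refine h.congr_deriv ?_
    simp only [id_eq]; push_cast; ring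
  have hu0 : u < 0 := hu.2.trans (neg_lt_zero.mpr (by positivity))
  have hu1 : u - 1 ≠ 0 := sub_ne_zero.mpr (by linarith)
  exact hN.div hD (pow_ne_zero 2 hu1)

lemma alg (p pd q s y ε c : ℝ) (hs : s ≠ 0) (hy : y ≠ 0) (hN : p + ε * (2*c) * s ≠ 0) :
    -(2/y) + (pd + ε * c * q * s⁻¹) * (p + ε * (2*c) * s)⁻¹
      = ((pd + ε * (2*c) * (1 / (2*s) * q)) * y^2
          - (p + ε * (2*c) * s) * (2*y)) / (y^2)^2 / ((p + ε * (2*c) * s) / y^2) := by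
  field_simp
  have hX : (s * ε * c * 2 + p)⁻¹ * (s * ε * c * 2 + p) = 1 :=
    inv_mul_cancel₀ (by contrapose! hN; linarith)
  linear_combination (2*s) * hX

lemma master_bot (α ε e : ℝ) (s : Set ℝ) (hα0 : 0 < α)
    (he1 : e < 0)
    (hmem : ∀ᶠ u in nhdsWithin e s, u ∈ Set.Ioo (-(α^2)⁻¹) (-α^2))
    (hQe : Qf α e = 0)
    (hPe : Pf α e < 0)
    (hd : 0 < ε * (α + α⁻¹) * Qd α e) :
    Tendsto (fun u => deriv (rho α ε) u / rho α ε u) (nhdsWithin e s) atBot := by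
  set l := nhdsWithin e s with hl
  have hls : l ≤ nhds e := nhdsWithin_le_nhds
  have hQcont : Continuous (Qf α) := by
    show Continuous fun u => u^3 + (α^2 + (α^2)⁻¹) * u^2 + u
    fun_prop
  have hQ0 : Tendsto (fun u => Qf α u) l (nhds 0) := by
    have := (hQcont.tendsto e).mono_left hls
    rwa [hQe] at this
  have hsq0 : Tendsto (fun u => Real.sqrt (Qf α u)) l (nhds 0) := by
    have := (Real.continuous_sqrt.tendsto 0).comp hQ0
    simpa [Function.comp_def] using this
  have hsqpos : ∀ᶠ u in l, Real.sqrt (Qf α u) ∈ Set.Ioi (0:ℝ) :=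
    hmem.mono fun u hu => Real.sqrt_pos.mpr (Qf_pos α hα0 hu)
  have hsqIoi : Tendsto (fun u => Real.sqrt (Qf α u)) l (nhdsWithin 0 (Set.Ioi 0)) :=
    tendsto_nhdsWithin_iff.mpr ⟨hsq0, hsqpos⟩
  have hinvTop : Tendsto (fun u => (Real.sqrt (Qf α u))⁻¹) l atTop :=
    tendsto_inv_nhdsGT_zero.comp hsqIoi
  have hQdcont : Continuous fun u => ε * (α + α⁻¹) * Qd α u := by
    show Continuous fun u => ε * (α + α⁻¹) * (3*u^2 + 2*(α^2 + (α^2)⁻¹)*u + 1)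
    fun_prop
  have hQdlim : Tendsto (fun u => ε * (α + α⁻¹) * Qd α u) l
      (nhds (ε * (α + α⁻¹) * Qd α e)) := (hQdcont.tendsto e).mono_left hls
  have hMain : Tendsto (fun u => ε * (α + α⁻¹) * Qd α u * (Real.sqrt (Qf α u))⁻¹) l atTop :=
    hQdlim.pos_mul_atTop hd hinvTop
  have hPdcont : Continuous fun u => Pd α u := by
    show Continuous fun u => 2*(u + 1) + 2*(α^2 + (α^2)⁻¹)
    fun_prop
  have hNd : Tendsto (fun u => Pd α u + ε * (α + α⁻¹) * Qd α u * (Real.sqrt (Qf α u))⁻¹)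
      l atTop := ((hPdcont.tendsto e).mono_left hls).add_atTop hMain
  have hPfcont : Continuous fun u => Pf α u := by
    show Continuous fun u => (u + 1)^2 + 2 * u * (α^2 + (α^2)⁻¹)
    fun_prop
  have hNlim : Tendsto (fun u => Nf α ε u) l (nhds (Pf α e)) := by
    have h1 : Tendsto (fun u => Pf α u) l (nhds (Pf α e)) :=
      (hPfcont.tendsto e).mono_left hls
    have h2 : Tendsto (fun u => ε * (2*(α + α⁻¹)) * Real.sqrt (Qf α u)) l (nhds 0) := by
      simpa using hsq0.const_mul (ε * (2*(α + α⁻¹)))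
    have := h1.add h2
    simpa [Nf] using this
  have hNinv : Tendsto (fun u => (Nf α ε u)⁻¹) l (nhds (Pf α e)⁻¹) := hNlim.inv₀ hPe.ne
  have hPeInv : (Pf α e)⁻¹ < 0 := inv_lt_zero.mpr hPe
  have hRatio : Tendsto (fun u =>
      (Pd α u + ε * (α + α⁻¹) * Qd α u * (Real.sqrt (Qf α u))⁻¹) * (Nf α ε u)⁻¹) l atBot :=
    hNd.atTop_mul_neg hPeInv hNinv
  have htail : Tendsto (fun u : ℝ => -(2/(u - 1))) l (nhds (-(2/(e - 1)))) := by
    have hc : ContinuousAt (fun u : ℝ => -(2/(u - 1))) e := by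
      have he : e - 1 ≠ 0 := sub_ne_zero.mpr (by linarith)
      fun_prop (disch := assumption)
    exact hc.tendsto.mono_left hls
  have hsum : Tendsto (fun u =>
      -(2/(u - 1)) + (Pd α u + ε * (α + α⁻¹) * Qd α u * (Real.sqrt (Qf α u))⁻¹)
        * (Nf α ε u)⁻¹) l atBot := htail.add_atBot hRatio
  have hNneg : ∀ᶠ u in l, Nf α ε u < 0 := hNlim.eventually_lt_const hPe
  refine hsum.congr' ?_
  filter_upwards [hmem, hNneg] with u hu hN
  have hQpos := Qf_pos α hα0 hu
  have hs0 : Real.sqrt (Qf α u) ≠ 0 := (Real.sqrt_pos.mpr hQpos).ne'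
  have hu0 : u < 0 := hu.2.trans (neg_lt_zero.mpr (by positivity))
  have hu1 : u - 1 ≠ 0 := sub_ne_zero.mpr (by linarith)
  rw [(hasDerivAt_rho α ε hα0 hu).deriv]
  have hNe : Pf α u + ε * (2*(α + α⁻¹)) * Real.sqrt (Qf α u) ≠ 0 := hN.ne
  have := alg (Pf α u) (Pd α u) (Qd α u) (Real.sqrt (Qf α u)) (u - 1) ε (α + α⁻¹)
    hs0 hu1 hNe
  calc -(2/(u - 1)) + (Pd α u + ε * (α + α⁻¹) * Qd α u * (Real.sqrt (Qf α u))⁻¹)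
        * (Nf α ε u)⁻¹
      = ((Pd α u + ε * (2*(α + α⁻¹)) * (1 / (2 * Real.sqrt (Qf α u)) * Qd α u)) * (u - 1)^2
          - Nf α ε u * (2 * (u - 1))) / ((u - 1)^2)^2 / (Nf α ε u / (u - 1)^2) := by
        unfold Nf
        exact this
    _ = _ := by rw [rho]

lemma master_top (α ε e : ℝ) (s : Set ℝ) (hα0 : 0 < α)
    (he1 : e < 0)
    (hmem : ∀ᶠ u in nhdsWithin e s, u ∈ Set.Ioo (-(α^2)⁻¹) (-α^2))
    (hQe : Qf α e = 0)
    (hPe : Pf α e < 0)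
    (hd : ε * (α + α⁻¹) * Qd α e < 0) :
    Tendsto (fun u => deriv (rho α ε) u / rho α ε u) (nhdsWithin e s) atTop := by
  set l := nhdsWithin e s with hl
  have hls : l ≤ nhds e := nhdsWithin_le_nhds
  have hQcont : Continuous (Qf α) := by
    show Continuous fun u => u^3 + (α^2 + (α^2)⁻¹) * u^2 + u
    fun_prop
  have hQ0 : Tendsto (fun u => Qf α u) l (nhds 0) := by
    have := (hQcont.tendsto e).mono_left hls
    rwa [hQe] at this
  have hsq0 : Tendsto (fun u => Real.sqrt (Qf α u)) l (nhds 0) := by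
    have := (Real.continuous_sqrt.tendsto 0).comp hQ0
    simpa [Function.comp_def] using this
  have hsqpos : ∀ᶠ u in l, Real.sqrt (Qf α u) ∈ Set.Ioi (0:ℝ) :=
    hmem.mono fun u hu => Real.sqrt_pos.mpr (Qf_pos α hα0 hu)
  have hsqIoi : Tendsto (fun u => Real.sqrt (Qf α u)) l (nhdsWithin 0 (Set.Ioi 0)) :=
    tendsto_nhdsWithin_iff.mpr ⟨hsq0, hsqpos⟩
  have hinvTop : Tendsto (fun u => (Real.sqrt (Qf α u))⁻¹) l atTop :=
    tendsto_inv_nhdsGT_zero.comp hsqIoi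
  have hQdcont : Continuous fun u => ε * (α + α⁻¹) * Qd α u := by
    show Continuous fun u => ε * (α + α⁻¹) * (3*u^2 + 2*(α^2 + (α^2)⁻¹)*u + 1)
    fun_prop
  have hQdlim : Tendsto (fun u => ε * (α + α⁻¹) * Qd α u) l
      (nhds (ε * (α + α⁻¹) * Qd α e)) := (hQdcont.tendsto e).mono_left hls
  have hMain : Tendsto (fun u => ε * (α + α⁻¹) * Qd α u * (Real.sqrt (Qf α u))⁻¹) l atBot :=
    hQdlim.neg_mul_atTop hd hinvTop
  have hPdcont : Continuous fun u => Pd α u := by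
    show Continuous fun u => 2*(u + 1) + 2*(α^2 + (α^2)⁻¹)
    fun_prop
  have hNd : Tendsto (fun u => Pd α u + ε * (α + α⁻¹) * Qd α u * (Real.sqrt (Qf α u))⁻¹)
      l atBot := ((hPdcont.tendsto e).mono_left hls).add_atBot hMain
  have hPfcont : Continuous fun u => Pf α u := by
    show Continuous fun u => (u + 1)^2 + 2 * u * (α^2 + (α^2)⁻¹)
    fun_prop
  have hNlim : Tendsto (fun u => Nf α ε u) l (nhds (Pf α e)) := by
    have h1 : Tendsto (fun u => Pf α u) l (nhds (Pf α e)) :=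
      (hPfcont.tendsto e).mono_left hls
    have h2 : Tendsto (fun u => ε * (2*(α + α⁻¹)) * Real.sqrt (Qf α u)) l (nhds 0) := by
      simpa using hsq0.const_mul (ε * (2*(α + α⁻¹)))
    have := h1.add h2
    simpa [Nf] using this
  have hNinv : Tendsto (fun u => (Nf α ε u)⁻¹) l (nhds (Pf α e)⁻¹) := hNlim.inv₀ hPe.ne
  have hPeInv : (Pf α e)⁻¹ < 0 := inv_lt_zero.mpr hPe
  have hRatio : Tendsto (fun u =>
      (Pd α u + ε * (α + α⁻¹) * Qd α u * (Real.sqrt (Qf α u))⁻¹) * (Nf α ε u)⁻¹) l atTop :=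
    hNd.atBot_mul_neg hPeInv hNinv
  have htail : Tendsto (fun u : ℝ => -(2/(u - 1))) l (nhds (-(2/(e - 1)))) := by
    have hc : ContinuousAt (fun u : ℝ => -(2/(u - 1))) e := by
      have he : e - 1 ≠ 0 := sub_ne_zero.mpr (by linarith)
      fun_prop (disch := assumption)
    exact hc.tendsto.mono_left hls
  have hsum : Tendsto (fun u =>
      -(2/(u - 1)) + (Pd α u + ε * (α + α⁻¹) * Qd α u * (Real.sqrt (Qf α u))⁻¹)
        * (Nf α ε u)⁻¹) l atTop := htail.add_atTop hRatio
  have hNneg : ∀ᶠ u in l, Nf α ε u < 0 := hNlim.eventually_lt_const hPe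
  refine hsum.congr' ?_
  filter_upwards [hmem, hNneg] with u hu hN
  have hQpos := Qf_pos α hα0 hu
  have hs0 : Real.sqrt (Qf α u) ≠ 0 := (Real.sqrt_pos.mpr hQpos).ne'
  have hu0 : u < 0 := hu.2.trans (neg_lt_zero.mpr (by positivity))
  have hu1 : u - 1 ≠ 0 := sub_ne_zero.mpr (by linarith)
  rw [(hasDerivAt_rho α ε hα0 hu).deriv]
  have hNe : Pf α u + ε * (2*(α + α⁻¹)) * Real.sqrt (Qf α u) ≠ 0 := hN.ne
  have := alg (Pf α u) (Pd α u) (Qd α u) (Real.sqrt (Qf α u)) (u - 1) ε (α + α⁻¹)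
    hs0 hu1 hNe
  calc -(2/(u - 1)) + (Pd α u + ε * (α + α⁻¹) * Qd α u * (Real.sqrt (Qf α u))⁻¹)
        * (Nf α ε u)⁻¹
      = ((Pd α u + ε * (2*(α + α⁻¹)) * (1 / (2 * Real.sqrt (Qf α u)) * Qd α u)) * (u - 1)^2
          - Nf α ε u * (2 * (u - 1))) / ((u - 1)^2)^2 / (Nf α ε u / (u - 1)^2) := by
        unfold Nf
        exact this
    _ = _ := by rw [rho]

/-- On the interval `(−α⁻², −α²)` the logarithmic derivative `ρ₋′/ρ₋` tends to `−∞` at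
`(−α²)⁻` and to `+∞` at `(−α⁻²)⁺`, while `ρ₊′/ρ₊` tends to `+∞` at `(−α²)⁻` and to `−∞`
at `(−α⁻²)⁺`. -/
theorem stmt11 (α : ℝ) (hα : α ∈ Set.Ioo (0 : ℝ) 1) :
    Tendsto (fun u => deriv (rhoM α) u / rhoM α u)
      (nhdsWithin (-α^2) (Set.Iio (-α^2))) atBot ∧
    Tendsto (fun u => deriv (rhoM α) u / rhoM α u)
      (nhdsWithin (-(α^2)⁻¹) (Set.Ioi (-(α^2)⁻¹))) atTop ∧
    Tendsto (fun u => deriv (rhoP α) u / rhoP α u)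
      (nhdsWithin (-α^2) (Set.Iio (-α^2))) atTop ∧
    Tendsto (fun u => deriv (rhoP α) u / rhoP α u)
      (nhdsWithin (-(α^2)⁻¹) (Set.Ioi (-(α^2)⁻¹))) atBot := by
  obtain ⟨hα0, hα1⟩ := hα
  have hα2 : (0:ℝ) < α^2 := by positivity
  have hinv : α^2 * (α^2)⁻¹ = 1 := mul_inv_cancel₀ hα2.ne'
  have hα2lt : α^2 < 1 := by nlinarith
  have hgt : (1:ℝ) < (α^2)⁻¹ := by nlinarith [hinv]
  have hord : -(α^2)⁻¹ < -α^2 := by nlinarith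
  have hc : (0:ℝ) < α + α⁻¹ := by positivity
  -- data at e = -α^2
  have hQe1 : Qf α (-α^2) = 0 := by unfold Qf; linear_combination (α^2) * hinv
  have hPe1 : Pf α (-α^2) < 0 := by unfold Pf; nlinarith [hinv, sq_nonneg (1 + α^2)]
  have hQd1 : Qd α (-α^2) < 0 := by unfold Qd; nlinarith [hinv]
  have he1 : (-α^2 : ℝ) < 0 := neg_lt_zero.mpr hα2
  have hmem1 : ∀ᶠ u in nhdsWithin (-α^2) (Set.Iio (-α^2)),
      u ∈ Set.Ioo (-(α^2)⁻¹) (-α^2) := by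
    filter_upwards [eventually_nhdsWithin_of_eventually_nhds (eventually_gt_nhds hord),
      self_mem_nhdsWithin] with u h1 h2
    exact ⟨h1, h2⟩
  -- data at e = -(α^2)⁻¹
  have hQe2 : Qf α (-(α^2)⁻¹) = 0 := by
    unfold Qf
    linear_combination (α^2)⁻¹ * hinv
  have hPe2 : Pf α (-(α^2)⁻¹) < 0 := by
    unfold Pf
    nlinarith [hinv, sq_nonneg (1 + (α^2)⁻¹), inv_pos.mpr hα2]
  have hQd2 : 0 < Qd α (-(α^2)⁻¹) := by
    unfold Qd
    have hgt4 : 1 < (α^2)⁻¹ * (α^2)⁻¹ := by nlinarith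
    nlinarith [hinv]
  have he2 : (-(α^2)⁻¹ : ℝ) < 0 := neg_lt_zero.mpr (inv_pos.mpr hα2)
  have hmem2 : ∀ᶠ u in nhdsWithin (-(α^2)⁻¹) (Set.Ioi (-(α^2)⁻¹)),
      u ∈ Set.Ioo (-(α^2)⁻¹) (-α^2) := by
    filter_upwards [eventually_nhdsWithin_of_eventually_nhds (eventually_lt_nhds hord),
      self_mem_nhdsWithin] with u h1 h2
    exact ⟨h2, h1⟩
  refine ⟨?_, ?_, ?_, ?_⟩
  · rw [rhoM_eq]
    exact master_bot α (-1) (-α^2) _ hα0 he1 hmem1 hQe1 hPe1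
      (by nlinarith [mul_pos hc (neg_pos.mpr hQd1)])
  · rw [rhoM_eq]
    exact master_top α (-1) (-(α^2)⁻¹) _ hα0 he2 hmem2 hQe2 hPe2
      (by nlinarith [mul_pos hc hQd2])
  · rw [rhoP_eq]
    exact master_top α 1 (-α^2) _ hα0 he1 hmem1 hQe1 hPe1
      (by nlinarith [mul_pos hc (neg_pos.mpr hQd1)])
  · rw [rhoP_eq]
    exact master_bot α 1 (-(α^2)⁻¹) _ hα0 he2 hmem2 hQe2 hPe2
      (by nlinarith [mul_pos hc hQd2])
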